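/- arXiv:math/0612485 — 3 statements merged into one kernel-verified Lean document; each statement's English description precedes it below -/
import Mathlib

section
/- Let f : ℝ → ℝ be measurable, nonincreasing, with 0 ≤ f(ξ) ≤ 1 for all ξ, f(ξ) = 1 for ξ < 0 and f(ξ) = 0 for ξ > C where C > 0. Define u = ∫₀^∞ f(ξ') dξ' and ρ(ξ) = ξ·f(ξ) + ∫_ξ^∞ f(ξ') dξ'. Then for every ξ ∈ ℝ, 0 ≤ ρ(ξ) − u·f(ξ) ≤ C·f(ξ)·(1 − f(ξ)). -/
open MeasureTheory Set

theorem stmt_0 (f : ℝ → ℝ) (C : ℝ) (hC : 0 < C)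
    (hmeas : Measurable f) (hmono : Antitone f)
    (h0 : ∀ ξ, 0 ≤ f ξ) (h1 : ∀ ξ, f ξ ≤ 1)
    (hneg : ∀ ξ < (0:ℝ), f ξ = 1) (hpos : ∀ ξ > C, f ξ = 0)
    (u : ℝ) (hu : u = ∫ ξ' in Ioi (0:ℝ), f ξ')
    (ρ : ℝ → ℝ) (hρ : ∀ ξ, ρ ξ = ξ * f ξ + ∫ ξ' in Ioi ξ, f ξ') :
    ∀ ξ : ℝ, 0 ≤ ρ ξ - u * f ξ ∧ ρ ξ - u * f ξ ≤ C * f ξ * (1 - f ξ) := by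
  -- integrability on Ioc intervals
  have hIoc : ∀ a b : ℝ, IntegrableOn f (Ioc a b) := by
    intro a b
    have hc : IntegrableOn (fun _ : ℝ => (1:ℝ)) (Ioc a b) :=
      integrableOn_const measure_Ioc_lt_top.ne
    exact hc.mono' hmeas.aestronglyMeasurable
      (ae_of_all _ fun x => by rw [Real.norm_eq_abs, abs_of_nonneg (h0 x)]; exact h1 x)
  have hIoiC : IntegrableOn f (Ioi C) := by
    exact integrableOn_zero.congr_fun (fun x hx => (hpos x hx).symm) measurableSet_Ioi
  have hIoiCzero : ∀ a : ℝ, C ≤ a → (∫ x in Ioi a, f x) = 0 := by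
    intro a ha
    rw [setIntegral_congr_fun measurableSet_Ioi
      (fun x (hx : a < x) => hpos x (lt_of_le_of_lt ha hx))]
    simp
  have hint : ∀ a : ℝ, IntegrableOn f (Ioi a) := by
    intro a
    rcases le_or_gt a C with h | h
    · rw [← Ioc_union_Ioi_eq_Ioi h]
      exact (hIoc a C).union hIoiC
    · exact hIoiC.mono_set (Ioi_subset_Ioi h.le)
  -- splitting lemma
  have hsplit : ∀ a b : ℝ, a ≤ b →
      (∫ x in Ioi a, f x) = (∫ x in Ioc a b, f x) + ∫ x in Ioi b, f x := by
    intro a b hab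
    rw [← Ioc_union_Ioi_eq_Ioi hab,
      setIntegral_union (Ioc_disjoint_Ioi le_rfl) measurableSet_Ioi (hIoc a b) (hint b)]
  -- constant comparisons on Ioc
  have hle : ∀ a b : ℝ, a ≤ b → (∫ x in Ioc a b, f x) ≤ (b - a) * f a := by
    intro a b hab
    calc (∫ x in Ioc a b, f x) ≤ ∫ _ in Ioc a b, f a := by
          apply setIntegral_mono_on (hIoc a b)
            (integrableOn_const measure_Ioc_lt_top.ne) measurableSet_Ioc
          intro x hx; exact hmono hx.1.le
      _ = (b - a) * f a := by
          rw [setIntegral_const, Real.volume_real_Ioc, max_eq_left (by linarith),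
            smul_eq_mul]
  have hge : ∀ a b : ℝ, a ≤ b → (b - a) * f b ≤ ∫ x in Ioc a b, f x := by
    intro a b hab
    calc (b - a) * f b = ∫ _ in Ioc a b, f b := by
          rw [setIntegral_const, Real.volume_real_Ioc, max_eq_left (by linarith),
            smul_eq_mul]
      _ ≤ ∫ x in Ioc a b, f x := by
          apply setIntegral_mono_on
            (integrableOn_const measure_Ioc_lt_top.ne) (hIoc a b) measurableSet_Ioc
          intro x hx; exact hmono hx.2
  have hnn : ∀ a : ℝ, 0 ≤ ∫ x in Ioi a, f x :=
    fun a => setIntegral_nonneg measurableSet_Ioi fun x _ => h0 x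
  intro ξ
  rw [hρ, hu]
  rcases lt_or_ge ξ 0 with hξ | hξ0
  · -- negative case: f ξ = 1 and ρ - u = 0
    have hfξ : f ξ = 1 := hneg ξ hξ
    have hI : (∫ x in Ioi ξ, f x) = (∫ x in Ioc ξ 0, f x) + ∫ x in Ioi (0:ℝ), f x :=
      hsplit ξ 0 hξ.le
    have hI2 : (∫ x in Ioc ξ 0, f x) = -ξ := by
      rw [MeasureTheory.integral_Ioc_eq_integral_Ioo,
        setIntegral_congr_fun measurableSet_Ioo
          (fun x (hx : x ∈ Ioo ξ 0) => hneg x hx.2 : EqOn f (fun _ => (1:ℝ)) (Ioo ξ 0)),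
        setIntegral_const, Real.volume_real_Ioo, max_eq_left (by linarith), smul_eq_mul]
      ring
    rw [hfξ, hI, hI2]
    constructor <;> nlinarith
  rcases le_or_gt ξ C with hξC | hξC
  · -- main case 0 ≤ ξ ≤ C
    have hI0 : (∫ x in Ioi (0:ℝ), f x) = (∫ x in Ioc 0 ξ, f x) + ∫ x in Ioi ξ, f x :=
      hsplit 0 ξ hξ0
    have hIξ : (∫ x in Ioi ξ, f x) = ∫ x in Ioc ξ C, f x := by
      rw [hsplit ξ C hξC, hIoiCzero C le_rfl, add_zero]
    have h2 : (∫ x in Ioc 0 ξ, f x) ≤ (ξ - 0) * f 0 := hle 0 ξ hξ0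
    have h3 : (ξ - 0) * f ξ ≤ ∫ x in Ioc 0 ξ, f x := hge 0 ξ hξ0
    have h4 : (∫ x in Ioc ξ C, f x) ≤ (C - ξ) * f ξ := hle ξ C hξC
    have h5 : 0 ≤ ∫ x in Ioc ξ C, f x := by rw [← hIξ]; exact hnn ξ
    have h6 : (∫ x in Ioc 0 ξ, f x) ≤ ξ := by
      have := h1 0; nlinarith [h0 0]
    have hf0 := h0 ξ
    have hf1 := h1 ξ
    rw [hI0, hIξ]
    constructor <;> nlinarith
  · -- ξ > C
    have hfξ : f ξ = 0 := hpos ξ hξC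
    have hI : (∫ x in Ioi ξ, f x) = 0 := hIoiCzero ξ hξC.le
    rw [hfξ, hI]
    norm_num
end

section
/- Let u_n : X → ℝ be a sequence of measurable functions on a finite measure space with 0 ≤ u_n ≤ 1, and define f_n(x,ξ) = 1 if ξ < u_n(x), 0 otherwise, on X × ℝ. Suppose f_n converges weakly-* in L^∞(X × (0,1)) to f(x,ξ) = 1_{ξ < u(x)} for some measurable u : X → [0,1]. Then u_n → u strongly in L¹(X). Conversely, if u_n → u in L¹(X), then 1_{ξ<u_n} ⇀ 1_{ξ<u} weakly-* in L^∞. -/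
open MeasureTheory Set Filter

lemma sliceInt (a : ℝ) : Integrable (fun ξ => if ξ < a then (1:ℝ) else 0)
    (volume.restrict (Ioo (0:ℝ) 1)) := by
  have : (fun ξ => if ξ < a then (1:ℝ) else 0) = (Iio a).indicator (fun _ => 1) := by
    ext ξ; simp [Set.indicator_apply]
  rw [this]
  exact (integrable_const 1).indicator measurableSet_Iio

lemma sliceB (a : ℝ) (ha0 : 0 ≤ a) (ha1 : a ≤ 1) :
    ∫ ξ in Ioo (0:ℝ) 1, (if ξ < a then (1:ℝ) else 0) = a := by
  have h1 : (fun ξ => if ξ < a then (1:ℝ) else 0) = (Iio a).indicator (fun _ => 1) := by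
    ext ξ; simp [Set.indicator_apply]
  rw [h1, setIntegral_indicator measurableSet_Iio]
  have h2 : Ioo (0:ℝ) 1 ∩ Iio a = Ioo 0 a := by
    ext ξ
    constructor
    · rintro ⟨⟨hx, _⟩, hy⟩; exact ⟨hx, hy⟩
    · rintro ⟨hx, hy⟩; exact ⟨⟨hx, lt_of_lt_of_le hy ha1⟩, hy⟩
  rw [h2]
  simp [Real.volume_Ioo, ENNReal.toReal_ofReal ha0, ha0]

lemma sliceA (a b : ℝ) (ha0 : 0 ≤ a) (ha1 : a ≤ 1) (hb0 : 0 ≤ b) (hb1 : b ≤ 1) :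
    ∫ ξ in Ioo (0:ℝ) 1,
      (if ξ < a then (1:ℝ) else 0) * (1 - 2 * (if ξ < b then (1:ℝ) else 0))
      = |a - b| - b := by
  have hpt : ∀ ξ : ℝ, (if ξ < a then (1:ℝ) else 0) * (1 - 2 * (if ξ < b then (1:ℝ) else 0))
      = (if ξ < a then (1:ℝ) else 0) - 2 * (if ξ < min a b then (1:ℝ) else 0) := by
    intro ξ
    by_cases h1 : ξ < a <;> by_cases h2 : ξ < b <;> simp [h1, h2, lt_min_iff] <;> norm_num
  simp_rw [hpt]
  rw [integral_sub (sliceInt a) ((sliceInt (min a b)).const_mul 2),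
    MeasureTheory.integral_const_mul,
    sliceB a ha0 ha1, sliceB (min a b) (le_min ha0 hb0) (min_le_of_left_le ha1)]
  rcases le_total a b with h | h
  · rw [min_eq_left h, abs_of_nonpos (by linarith)]; ring
  · rw [min_eq_right h, abs_of_nonneg (by linarith)]; ring

theorem stmt_6 {X : Type*} [MeasurableSpace X] (μ : Measure X) [IsFiniteMeasure μ]
    (u_n : ℕ → X → ℝ) (u : X → ℝ)
    (hmeas : ∀ n, Measurable (u_n n)) (humeas : Measurable u)
    (hb0 : ∀ n x, 0 ≤ u_n n x) (hb1 : ∀ n x, u_n n x ≤ 1)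
    (hu0 : ∀ x, 0 ≤ u x) (hu1 : ∀ x, u x ≤ 1) :
    (∀ φ : X × ℝ → ℝ,
        Integrable φ (μ.prod (volume.restrict (Ioo (0:ℝ) 1))) →
        Tendsto
          (fun n => ∫ p, (if p.2 < u_n n p.1 then (1:ℝ) else 0) * φ p
            ∂(μ.prod (volume.restrict (Ioo (0:ℝ) 1))))
          atTop
          (nhds (∫ p, (if p.2 < u p.1 then (1:ℝ) else 0) * φ p
            ∂(μ.prod (volume.restrict (Ioo (0:ℝ) 1)))))) ↔
    Tendsto (fun n => ∫ x, |u_n n x - u x| ∂μ) atTop (nhds 0) := by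
  set ν := μ.prod (volume.restrict (Ioo (0:ℝ) 1)) with hν
  -- measurability of indicator functions on the product
  have hindmeas : ∀ v : X → ℝ, Measurable v →
      Measurable (fun p : X × ℝ => if p.2 < v p.1 then (1:ℝ) else 0) := by
    intro v hv
    exact Measurable.ite (measurableSet_lt measurable_snd (hv.comp measurable_fst))
      measurable_const measurable_const
  -- integrability helpers on X
  have hXint : ∀ v : X → ℝ, Measurable v → (∀ x, |v x| ≤ 1) → Integrable v μ := by
    intro v hv hb
    exact (integrable_const (1:ℝ)).mono' hv.aestronglyMeasurable
      (Filter.Eventually.of_forall (fun x => by simpa [Real.norm_eq_abs] using hb x))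
  have huint : Integrable u μ := hXint u humeas (fun x => by
    rw [abs_of_nonneg (hu0 x)]; exact hu1 x)
  have habsint : ∀ n, Integrable (fun x => |u_n n x - u x|) μ := by
    intro n
    refine hXint _ ((hmeas n).sub humeas).abs (fun x => ?_)
    rw [abs_abs, abs_sub_le_iff]
    constructor <;> nlinarith [hb0 n x, hb1 n x, hu0 x, hu1 x]
  constructor
  · -- weak-* convergence ⇒ L¹ convergence
    intro h
    set φ : X × ℝ → ℝ := fun p => 1 - 2 * (if p.2 < u p.1 then (1:ℝ) else 0) with hφdef
    have hφint : Integrable φ ν := by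
      have : Integrable (fun p : X × ℝ => if p.2 < u p.1 then (1:ℝ) else 0) ν := by
        have heq : (fun p : X × ℝ => if p.2 < u p.1 then (1:ℝ) else 0)
            = ({p : X × ℝ | p.2 < u p.1}).indicator (fun _ => 1) := by
          ext p; simp [Set.indicator_apply]
        rw [heq]
        exact (integrable_const 1).indicator
          (measurableSet_lt measurable_snd (humeas.comp measurable_fst))
      exact (integrable_const 1).sub (this.const_mul 2)
    have key : ∀ v : X → ℝ, Measurable v → (∀ x, 0 ≤ v x) → (∀ x, v x ≤ 1) →
        ∫ p, (if p.2 < v p.1 then (1:ℝ) else 0) * φ p ∂ν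
        = (∫ x, |v x - u x| ∂μ) - ∫ x, u x ∂μ := by
      intro v hv hv0 hv1
      have hint : Integrable (fun p => (if p.2 < v p.1 then (1:ℝ) else 0) * φ p) ν :=
        hφint.bdd_mul (hindmeas v hv).aestronglyMeasurable
          (c := 1) (Filter.Eventually.of_forall fun p => by split <;> simp)
      rw [hν] at hint ⊢
      rw [MeasureTheory.integral_prod _ hint]
      have hinner : ∀ x, (∫ ξ, (if ξ < v x then (1:ℝ) else 0) * φ (x, ξ)
          ∂(volume.restrict (Ioo (0:ℝ) 1))) = |v x - u x| - u x := by
        intro x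
        exact sliceA (v x) (u x) (hv0 x) (hv1 x) (hu0 x) (hu1 x)
      rw [integral_congr_ae (Filter.Eventually.of_forall hinner)]
      have habs : Integrable (fun x => |v x - u x|) μ := by
        refine hXint _ (hv.sub humeas).abs (fun x => ?_)
        rw [abs_abs, abs_sub_le_iff]
        constructor <;> nlinarith [hv0 x, hv1 x, hu0 x, hu1 x]
      exact integral_sub habs huint
    have h' := h φ hφint
    have hn : ∀ n, ∫ p, (if p.2 < u_n n p.1 then (1:ℝ) else 0) * φ p ∂ν
        = (∫ x, |u_n n x - u x| ∂μ) - ∫ x, u x ∂μ :=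
      fun n => key (u_n n) (hmeas n) (hb0 n) (hb1 n)
    have hu' : ∫ p, (if p.2 < u p.1 then (1:ℝ) else 0) * φ p ∂ν
        = - ∫ x, u x ∂μ := by
      rw [key u humeas hu0 hu1]; simp
    simp_rw [hn, hu'] at h'
    have := h'.add (tendsto_const_nhds (x := ∫ x, u x ∂μ))
    simpa using this
  · -- L¹ convergence ⇒ weak-* convergence
    intro ht φ hφ
    -- the "bad" sets
    set A : ℕ → Set (X × ℝ) := fun n =>
      {p : X × ℝ | p.2 < u_n n p.1 ∧ ¬ p.2 < u p.1} ∪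
      {p : X × ℝ | p.2 < u p.1 ∧ ¬ p.2 < u_n n p.1} with hA
    have hAmeas : ∀ n, MeasurableSet (A n) := by
      intro n
      have h1 := measurableSet_lt measurable_snd ((hmeas n).comp measurable_fst)
      have h2 := measurableSet_lt measurable_snd (humeas.comp measurable_fst)
      exact (h1.inter h2.compl).union (h2.inter h1.compl)
    -- measure of the bad sets tends to zero
    have hbound : ∀ n, ν (A n) ≤ ∫⁻ x, ENNReal.ofReal |u_n n x - u x| ∂μ := by
      intro n
      rw [hν, Measure.prod_apply (hAmeas n)]
      refine lintegral_mono (fun x => ?_)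
      have hsub : Prod.mk x ⁻¹' (A n) ⊆ Ico (min (u_n n x) (u x)) (max (u_n n x) (u x)) := by
        rintro ξ (⟨h1, h2⟩ | ⟨h1, h2⟩)
        · push_neg at h2
          exact ⟨le_trans (min_le_right _ _) h2, lt_of_lt_of_le h1 (le_max_left _ _)⟩
        · push_neg at h2
          exact ⟨le_trans (min_le_left _ _) h2, lt_of_lt_of_le h1 (le_max_right _ _)⟩
      calc (volume.restrict (Ioo (0:ℝ) 1)) (Prod.mk x ⁻¹' (A n))
          ≤ volume (Prod.mk x ⁻¹' (A n)) := Measure.restrict_le_self _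
        _ ≤ volume (Ico (min (u_n n x) (u x)) (max (u_n n x) (u x))) := measure_mono hsub
        _ = ENNReal.ofReal |u_n n x - u x| := by
            rw [Real.volume_Ico, max_sub_min_eq_abs, abs_sub_comm]
    have hlint : ∀ n, ∫⁻ x, ENNReal.ofReal |u_n n x - u x| ∂μ
        = ENNReal.ofReal (∫ x, |u_n n x - u x| ∂μ) := by
      intro n
      rw [MeasureTheory.ofReal_integral_eq_lintegral_ofReal (habsint n)
        (Filter.Eventually.of_forall (fun x => abs_nonneg _))]
    have hνA : Tendsto (fun n => ν (A n)) atTop (nhds 0) := by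
      have h1 : Tendsto (fun n => ENNReal.ofReal (∫ x, |u_n n x - u x| ∂μ)) atTop (nhds 0) := by
        have := (ENNReal.continuous_ofReal.tendsto 0).comp ht
        simpa [Function.comp_def] using this
      refine tendsto_of_tendsto_of_tendsto_of_le_of_le tendsto_const_nhds h1
        (fun n => zero_le) (fun n => ?_)
      rw [← hlint n]; exact hbound n
    -- the set integrals of |φ| over A n tend to zero
    have hset : Tendsto (fun n => ∫ p in A n, |φ p| ∂ν) atTop (nhds 0) :=
      hφ.abs.tendsto_setIntegral_nhds_zero hνA
    -- integrability of the products
    have hpint : ∀ v : X → ℝ, Measurable v →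
        Integrable (fun p => (if p.2 < v p.1 then (1:ℝ) else 0) * φ p) ν := by
      intro v hv
      exact hφ.bdd_mul (hindmeas v hv).aestronglyMeasurable (c := 1) (Filter.Eventually.of_forall fun p => by split <;> simp)
    -- the norm bound
    have hnorm : ∀ n, ‖(∫ p, (if p.2 < u_n n p.1 then (1:ℝ) else 0) * φ p ∂ν)
        - ∫ p, (if p.2 < u p.1 then (1:ℝ) else 0) * φ p ∂ν‖
        ≤ ∫ p in A n, |φ p| ∂ν := by
      intro n
      rw [← integral_sub (hpint (u_n n) (hmeas n)) (hpint u humeas)]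
      calc ‖∫ p, ((if p.2 < u_n n p.1 then (1:ℝ) else 0) * φ p
              - (if p.2 < u p.1 then (1:ℝ) else 0) * φ p) ∂ν‖
          ≤ ∫ p, ‖(if p.2 < u_n n p.1 then (1:ℝ) else 0) * φ p
              - (if p.2 < u p.1 then (1:ℝ) else 0) * φ p‖ ∂ν :=
            norm_integral_le_integral_norm _
        _ ≤ ∫ p, (A n).indicator (fun p => |φ p|) p ∂ν := by
            refine integral_mono ((hpint (u_n n) (hmeas n)).sub (hpint u humeas)).norm
              (hφ.abs.indicator (hAmeas n)) (fun p => ?_)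
            by_cases hp : p ∈ A n
            · rw [Set.indicator_of_mem hp]
              rw [Real.norm_eq_abs, ← sub_mul, abs_mul]
              have : |(if p.2 < u_n n p.1 then (1:ℝ) else 0)
                  - (if p.2 < u p.1 then (1:ℝ) else 0)| ≤ 1 := by
                split_ifs <;> norm_num
              nlinarith [abs_nonneg (φ p)]
            · rw [Set.indicator_of_notMem hp]
              have : (if p.2 < u_n n p.1 then (1:ℝ) else 0)
                  = (if p.2 < u p.1 then (1:ℝ) else 0) := by
                rw [hA] at hp
                simp only [Set.mem_union, Set.mem_setOf_eq, not_or, not_and_or, not_not] at hp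
                split_ifs with h1 h2 h2 <;> first | rfl | tauto
              rw [this, sub_self, norm_zero]
        _ = ∫ p in A n, |φ p| ∂ν := integral_indicator (hAmeas n)
    -- conclude
    rw [← tendsto_sub_nhds_zero_iff]
    exact squeeze_zero_norm hnorm hset
end

section
/- Let f, f_n : X × ℝ → [0,1] be measurable on a finite measure space, with each f_n(x,·) of the form 1_{ξ < u_n(x)} for measurable u_n : X → [0,1], and suppose f_n ⇀ f weakly-* in L^∞. Then for almost every x, the function ξ ↦ f(x,ξ) is (a.e. equal to) a nonincreasing function, f(x,ξ) = 1 for a.e. ξ < 0 and f(x,ξ) = 0 for a.e. ξ > 1. -/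
open MeasureTheory Set Filter

set_option linter.unusedSectionVars false
set_option linter.unusedTactic false

lemma slice_integral {α : Type*} [MeasurableSpace α] (ν : Measure α) [SigmaFinite ν]
    {s : Set (α × ℝ)} (hs : MeasurableSet s) (hsfin : (ν.prod volume) s < ⊤)
    {h : α → ℝ} (hh : Measurable h) (hh0 : ∀ p, 0 ≤ h p) (hh1 : ∀ p, h p ≤ 1) :
    ∫ q in s, h q.1 ∂(ν.prod volume)
      = ∫ p, h p * (volume (Prod.mk p ⁻¹' s)).toReal ∂ν := by
  have hint : Integrable (s.indicator fun q : α × ℝ => h q.1) (ν.prod volume) := by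
    rw [integrable_indicator_iff hs]
    refine Measure.integrableOn_of_bounded (M := 1) hsfin.ne
      (hh.comp measurable_fst).aestronglyMeasurable (ae_of_all _ fun q => ?_)
    rw [Real.norm_eq_abs, abs_of_nonneg (hh0 _)]
    exact hh1 _
  rw [← integral_indicator hs, MeasureTheory.integral_prod _ hint]
  refine integral_congr_ae (ae_of_all _ fun p => ?_)
  have hptw : ∀ y : ℝ, s.indicator (fun q : α × ℝ => h q.1) (p, y)
      = h p * (Prod.mk p ⁻¹' s).indicator (fun _ => (1:ℝ)) y := by
    intro y
    by_cases hy : (p, y) ∈ s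
    · rw [Set.indicator_of_mem hy, Set.indicator_of_mem (Set.mem_preimage.2 hy)]
      ring
    · rw [Set.indicator_of_notMem hy,
        Set.indicator_of_notMem (fun hc => hy (Set.mem_preimage.1 hc))]
      ring
  simp_rw [hptw]
  rw [integral_const_mul]
  congr 1
  simpa [Measure.real, Pi.one_def] using integral_indicator_one (measurable_prodMk_left hs)

lemma antitone_rep (g : ℝ → ℝ) (hg1 : ∀ ξ, g ξ ≤ 1)
    (hm : ∀ᵐ z : ℝ × ℝ ∂((volume : Measure ℝ).prod volume), z.1 < z.2 → g z.2 ≤ g z.1) :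
    ∃ F : ℝ → ℝ, Antitone F ∧ ∀ᵐ ξ : ℝ, g ξ = F ξ := by
  have hP : ∀ᵐ a : ℝ, ∀ᵐ b : ℝ, a < b → g b ≤ g a := Measure.ae_ae_of_ae_prod hm
  have hswap : MeasurePreserving (Prod.swap : ℝ × ℝ → ℝ × ℝ)
      ((volume : Measure ℝ).prod volume) ((volume : Measure ℝ).prod volume) :=
    Measure.measurePreserving_swap
  have hm' : ∀ᵐ z : ℝ × ℝ ∂((volume : Measure ℝ).prod volume), z.2 < z.1 → g z.1 ≤ g z.2 :=
    hswap.quasiMeasurePreserving.ae hm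
  have hQ : ∀ᵐ a : ℝ, ∀ᵐ b : ℝ, b < a → g a ≤ g b := Measure.ae_ae_of_ae_prod hm'
  set S : Set ℝ := {a | (∀ᵐ b : ℝ, a < b → g b ≤ g a) ∧ (∀ᵐ b : ℝ, b < a → g a ≤ g b)} with hSdef
  have hS : ∀ᵐ a : ℝ, a ∈ S := hP.and hQ
  have hSc : volume Sᶜ = 0 := hS
  have hSne : ∀ ξ : ℝ, (S ∩ Ici ξ).Nonempty := by
    intro ξ
    by_contra hc
    rw [Set.not_nonempty_iff_eq_empty] at hc
    have hsub : Ici ξ ⊆ Sᶜ := fun a ha haS =>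
      Set.eq_empty_iff_forall_notMem.1 hc a ⟨haS, ha⟩
    have := measure_mono_null hsub hSc
    rw [Real.volume_Ici] at this
    exact ENNReal.top_ne_zero this
  have hBdd : ∀ ξ : ℝ, BddAbove (g '' (S ∩ Ici ξ)) := by
    intro ξ
    refine ⟨1, fun y hy => ?_⟩
    obtain ⟨c, _, rfl⟩ := hy
    exact hg1 c
  have key : ∀ a ∈ S, ∀ b ∈ S, a < b → g b ≤ g a := by
    intro a ha b hb hab
    have h3 : ∀ᵐ c : ℝ, (a < c → g c ≤ g a) ∧ (c < b → g b ≤ g c) := ha.1.and hb.2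
    have hpos : volume (Ioo a b) ≠ 0 := by
      rw [Real.volume_Ioo]
      simp only [ne_eq, ENNReal.ofReal_eq_zero, not_le]
      linarith
    have hex : ∃ c ∈ Ioo a b, (a < c → g c ≤ g a) ∧ (c < b → g b ≤ g c) := by
      by_contra hcex
      have hsub : Ioo a b ⊆ {c : ℝ | ¬((a < c → g c ≤ g a) ∧ (c < b → g b ≤ g c))} :=
        fun c hcc hPc => hcex ⟨c, hcc, hPc⟩
      exact hpos (measure_mono_null hsub (ae_iff.1 h3))
    obtain ⟨c, hc, hc1, hc2⟩ := hex
    exact le_trans (hc2 hc.2) (hc1 hc.1)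
  refine ⟨fun ξ => sSup (g '' (S ∩ Ici ξ)), ?_, ?_⟩
  · intro a b hab
    exact csSup_le_csSup (hBdd a) ((hSne b).image g)
      (Set.image_mono (Set.inter_subset_inter_right S (Set.Ici_subset_Ici.2 hab)))
  · refine hS.mono fun a ha => ?_
    refine le_antisymm ?_ ?_
    · exact le_csSup (hBdd a) (Set.mem_image_of_mem g ⟨ha, Set.self_mem_Ici⟩)
    · refine csSup_le ((hSne a).image g) ?_
      rintro y ⟨c, ⟨hcS, hca⟩, rfl⟩
      rcases eq_or_lt_of_le (Set.mem_Ici.1 hca) with h | h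
      · exact le_of_eq (congrArg g h.symm)
      · exact key a ha c hcS h

section Stmt15Aux
variable {X : Type*} [MeasurableSpace X] (μ : Measure X) [IsFiniteMeasure μ]
    (u_n : ℕ → X → ℝ) (f : X × ℝ → ℝ)
    (hmeas : ∀ n, Measurable (u_n n)) (hfmeas : Measurable f)
    (hb : ∀ n x, u_n n x ∈ Icc (0:ℝ) 1)
    (hf0 : ∀ p, 0 ≤ f p) (hf1 : ∀ p, f p ≤ 1)
    (hweak : ∀ φ : X × ℝ → ℝ, Integrable φ (μ.prod volume) →
      Tendsto
        (fun n => ∫ p, (if p.2 < u_n n p.1 then (1:ℝ) else 0) * φ p ∂(μ.prod volume))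
        atTop (nhds (∫ p, f p * φ p ∂(μ.prod volume))))

include hmeas hfmeas hb hf0 hf1 hweak in
theorem stepA1' : ∀ᵐ p ∂(μ.prod (volume : Measure ℝ)), 1 < p.2 → f p = 0 := by
  have hM : ∀ M : ℕ, ∀ᵐ p ∂(μ.prod (volume : Measure ℝ)),
      p ∈ ((univ : Set X) ×ˢ Ioo (1:ℝ) (M+2)) → f p = 0 := by
    intro M
    set sM : Set (X × ℝ) := (univ : Set X) ×ˢ Ioo (1:ℝ) (M+2) with hsMdef
    have hsM : MeasurableSet sM := MeasurableSet.univ.prod measurableSet_Ioo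
    have hsMfin : (μ.prod volume) sM < ⊤ := by
      rw [hsMdef, Measure.prod_prod]
      exact ENNReal.mul_lt_top (measure_lt_top μ _) (by simp [Real.volume_Ioo])
    set φ : X × ℝ → ℝ := sM.indicator fun _ => (1:ℝ) with hφdef
    have hφint : Integrable φ (μ.prod volume) := by
      rw [hφdef, integrable_indicator_iff hsM]
      exact integrableOn_const hsMfin.ne
    have hzero : ∀ n, ∫ p, (if p.2 < u_n n p.1 then (1:ℝ) else 0) * φ p ∂(μ.prod volume) = 0 := by
      intro n
      have hp0 : ∀ p : X × ℝ, (if p.2 < u_n n p.1 then (1:ℝ) else 0) * φ p = 0 := by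
        intro p
        by_cases hp : p ∈ sM
        · have h1 : (1:ℝ) < p.2 := hp.2.1
          have : ¬ p.2 < u_n n p.1 := not_lt.2 (le_trans (hb n p.1).2 (le_of_lt h1))
          simp [this]
        · simp [hφdef, Set.indicator_of_notMem hp]
      rw [show (fun p => (if p.2 < u_n n p.1 then (1:ℝ) else 0) * φ p) = fun _ => (0:ℝ) from
        funext hp0]
      exact integral_zero _ _
    have hlim := hweak φ hφint
    have hlim0 : Tendsto (fun n => ∫ p, (if p.2 < u_n n p.1 then (1:ℝ) else 0) * φ p
        ∂(μ.prod volume)) atTop (nhds 0) := by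
      simp only [hzero]; exact tendsto_const_nhds
    have hzero' : ∫ p, f p * φ p ∂(μ.prod volume) = 0 := tendsto_nhds_unique hlim hlim0
    have hff : ∫ p in sM, f p ∂(μ.prod volume) = 0 := by
      rw [← hzero', ← integral_indicator hsM]
      congr 1
      funext p
      by_cases hp : p ∈ sM
      · simp [hφdef, Set.indicator_of_mem hp]
      · simp [hφdef, Set.indicator_of_notMem hp]
    have hfint : IntegrableOn f sM (μ.prod volume) :=
      Measure.integrableOn_of_bounded (M := 1) hsMfin.ne hfmeas.aestronglyMeasurable
        (ae_of_all _ fun p => by rw [Real.norm_eq_abs, abs_of_nonneg (hf0 p)]; exact hf1 p)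
    have hae := (setIntegral_eq_zero_iff_of_nonneg_ae (ae_of_all _ fun p => hf0 p) hfint).1 hff
    exact (ae_restrict_iff' hsM).1 hae
  rw [← ae_all_iff] at hM
  refine hM.mono fun p hp h1 => ?_
  refine hp ⌈p.2⌉₊ ⟨Set.mem_univ _, h1, ?_⟩
  have := Nat.le_ceil p.2
  push_cast
  linarith

include hmeas hfmeas hb hf0 hf1 hweak in
theorem stepA2' : ∀ᵐ p ∂(μ.prod (volume : Measure ℝ)), p.2 < 0 → f p = 1 := by
  have hM : ∀ M : ℕ, ∀ᵐ p ∂(μ.prod (volume : Measure ℝ)),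
      p ∈ ((univ : Set X) ×ˢ Ioo (-(M:ℝ)-1) 0) → f p = 1 := by
    intro M
    set sM : Set (X × ℝ) := (univ : Set X) ×ˢ Ioo (-(M:ℝ)-1) 0 with hsMdef
    have hsM : MeasurableSet sM := MeasurableSet.univ.prod measurableSet_Ioo
    have hsMfin : (μ.prod volume) sM < ⊤ := by
      rw [hsMdef, Measure.prod_prod]
      exact ENNReal.mul_lt_top (measure_lt_top μ _) (by simp [Real.volume_Ioo])
    set φ : X × ℝ → ℝ := sM.indicator fun _ => (1:ℝ) with hφdef
    have hφint : Integrable φ (μ.prod volume) := by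
      rw [hφdef, integrable_indicator_iff hsM]
      exact integrableOn_const hsMfin.ne
    have hone : ∀ n, ∫ p, (if p.2 < u_n n p.1 then (1:ℝ) else 0) * φ p ∂(μ.prod volume)
        = ∫ p, φ p ∂(μ.prod volume) := by
      intro n
      congr 1
      funext p
      by_cases hp : p ∈ sM
      · have h1 : p.2 < 0 := hp.2.2
        have : p.2 < u_n n p.1 := lt_of_lt_of_le h1 (hb n p.1).1
        simp [this]
      · simp [hφdef, Set.indicator_of_notMem hp]
    have hlim := hweak φ hφint
    have hlim0 : Tendsto (fun n => ∫ p, (if p.2 < u_n n p.1 then (1:ℝ) else 0) * φ p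
        ∂(μ.prod volume)) atTop (nhds (∫ p, φ p ∂(μ.prod volume))) := by
      simp only [hone]; exact tendsto_const_nhds
    have heq : ∫ p, f p * φ p ∂(μ.prod volume) = ∫ p, φ p ∂(μ.prod volume) :=
      tendsto_nhds_unique hlim hlim0
    have hfφ : ∫ p, f p * φ p ∂(μ.prod volume) = ∫ p in sM, f p ∂(μ.prod volume) := by
      rw [← integral_indicator hsM]
      congr 1
      funext p
      by_cases hp : p ∈ sM
      · simp [hφdef, Set.indicator_of_mem hp]
      · simp [hφdef, Set.indicator_of_notMem hp]
    have hφval : ∫ p, φ p ∂(μ.prod volume) = ((μ.prod volume) sM).toReal := by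
      rw [hφdef]
      simpa [Measure.real, Pi.one_def] using integral_indicator_one hsM
    have hfint : IntegrableOn f sM (μ.prod volume) :=
      Measure.integrableOn_of_bounded (M := 1) hsMfin.ne hfmeas.aestronglyMeasurable
        (ae_of_all _ fun p => by rw [Real.norm_eq_abs, abs_of_nonneg (hf0 p)]; exact hf1 p)
    have hsub : ∫ p in sM, ((1:ℝ) - f p) ∂(μ.prod volume) = 0 := by
      rw [integral_sub (integrableOn_const (C := (1:ℝ)) hsMfin.ne) hfint]
      rw [setIntegral_const]
      rw [← hfφ, heq, hφval]
      simp [Measure.real]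
    have hfint1 : IntegrableOn (fun p => (1:ℝ) - f p) sM (μ.prod volume) :=
      (integrableOn_const hsMfin.ne).sub hfint
    have hae := (setIntegral_eq_zero_iff_of_nonneg_ae
      (ae_of_all _ fun p => sub_nonneg.2 (hf1 p)) hfint1).1 hsub
    have := (ae_restrict_iff' hsM).1 hae
    refine this.mono fun p hp hmem => ?_
    have := hp hmem
    simp only [Pi.zero_apply] at this
    linarith
  rw [← ae_all_iff] at hM
  refine hM.mono fun p hp h1 => ?_
  refine hp ⌈-p.2⌉₊ ⟨Set.mem_univ _, ?_, h1⟩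
  have := Nat.le_ceil (-p.2)
  push_cast
  linarith


set_option maxHeartbeats 1000000 in
include hmeas hfmeas hb hf0 hf1 hweak in
theorem stepB' : ∀ᵐ q ∂((μ.prod (volume : Measure ℝ)).prod (volume : Measure ℝ)),
    q.1.2 < q.2 → f (q.1.1, q.2) ≤ f q.1 := by
  set π := (μ.prod (volume : Measure ℝ)).prod (volume : Measure ℝ) with hπdef
  set E : (X × ℝ) × ℝ ≃ᵐ (X × ℝ) × ℝ :=
    MeasurableEquiv.prodAssoc.trans
      (((MeasurableEquiv.refl X).prodCongr MeasurableEquiv.prodComm).trans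
        MeasurableEquiv.prodAssoc.symm) with hEdef
  have hEapp : ∀ q : (X × ℝ) × ℝ, E q = ((q.1.1, q.2), q.1.2) := fun q => rfl
  have hE : MeasurePreserving E π π := by
    have h1 := measurePreserving_prodAssoc μ (volume : Measure ℝ) (volume : Measure ℝ)
    have h2 : MeasurePreserving (Prod.map (id : X → X) (Prod.swap : ℝ × ℝ → ℝ × ℝ))
        (μ.prod ((volume : Measure ℝ).prod volume)) (μ.prod ((volume : Measure ℝ).prod volume)) :=
      (MeasurePreserving.id μ).prod Measure.measurePreserving_swap
    have h3 := MeasurePreserving.symm _ h1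
    have hcomp := (h3.comp h2).comp h1
    have hfe : ⇑E = ((⇑(MeasurableEquiv.prodAssoc
        (α := X) (β := ℝ) (γ := ℝ)).symm ∘ Prod.map id Prod.swap) ∘ ⇑MeasurableEquiv.prodAssoc) :=
      funext fun q => rfl
    rw [hπdef]
    exact hfe ▸ hcomp
  -- the key set-integral inequality
  have key : ∀ s : Set ((X × ℝ) × ℝ), MeasurableSet s →
      (∀ q ∈ s, q.1.2 < q.2) → π s < ⊤ →
      0 ≤ ∫ q in s, (f q.1 - f (q.1.1, q.2)) ∂π := by
    intro s hs hsR hsfin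
    set s' : Set ((X × ℝ) × ℝ) := ⇑E ⁻¹' s with hs'def
    have hs' : MeasurableSet s' := hs.preimage E.measurable
    have hs'fin : π s' < ⊤ := by
      rw [hs'def, hE.measure_preimage hs.nullMeasurableSet]; exact hsfin
    set A : X × ℝ → ℝ := fun p => (volume (Prod.mk p ⁻¹' s)).toReal with hAdef
    set B : X × ℝ → ℝ := fun p => (volume (Prod.mk p ⁻¹' s')).toReal with hBdef
    have hAint : Integrable A (μ.prod volume) :=
      Measure.integrable_measure_prodMk_left hs hsfin.ne
    have hBint : Integrable B (μ.prod volume) :=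
      Measure.integrable_measure_prodMk_left hs' hs'fin.ne
    have hcov : ∀ h : X × ℝ → ℝ, Measurable h →
        ∫ q in s', h q.1 ∂π = ∫ q in s, h (q.1.1, q.2) ∂π := by
      intro h hh
      have hind : (fun q => (s.indicator fun q : (X × ℝ) × ℝ => h (q.1.1, q.2)) (E q))
          = s'.indicator fun q : (X × ℝ) × ℝ => h q.1 := by
        funext q
        by_cases hq : E q ∈ s
        · rw [Set.indicator_of_mem hq, Set.indicator_of_mem (show q ∈ s' from hq)]
          rfl
        · rw [Set.indicator_of_notMem hq, Set.indicator_of_notMem (show q ∉ s' from hq)]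
      calc ∫ q in s', h q.1 ∂π = ∫ q, s'.indicator (fun q : (X × ℝ) × ℝ => h q.1) q ∂π :=
            (integral_indicator hs').symm
        _ = ∫ q, (s.indicator fun q : (X × ℝ) × ℝ => h (q.1.1, q.2)) (E q) ∂π := by
            rw [hind]
        _ = ∫ q, s.indicator (fun q : (X × ℝ) × ℝ => h (q.1.1, q.2)) q ∂π :=
            hE.integral_comp E.measurableEmbedding _
        _ = ∫ q in s, h (q.1.1, q.2) ∂π := integral_indicator hs
    have hIdA : ∀ h : X × ℝ → ℝ, Measurable h → (∀ p, 0 ≤ h p) → (∀ p, h p ≤ 1) →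
        ∫ q in s, h q.1 ∂π = ∫ p, h p * A p ∂(μ.prod volume) := fun h hh h0 h1 =>
      slice_integral _ hs hsfin hh h0 h1
    have hIdB : ∀ h : X × ℝ → ℝ, Measurable h → (∀ p, 0 ≤ h p) → (∀ p, h p ≤ 1) →
        ∫ q in s', h q.1 ∂π = ∫ p, h p * B p ∂(μ.prod volume) := fun h hh h0 h1 =>
      slice_integral _ hs' hs'fin hh h0 h1
    have hInmeas : ∀ n, Measurable fun p : X × ℝ => (if p.2 < u_n n p.1 then (1:ℝ) else 0) :=
      fun n => Measurable.ite
        (measurableSet_lt measurable_snd ((hmeas n).comp measurable_fst))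
        measurable_const measurable_const
    have hIn0 : ∀ n (p : X × ℝ), 0 ≤ (if p.2 < u_n n p.1 then (1:ℝ) else 0) := by
      intro n p; split_ifs <;> norm_num
    have hIn1 : ∀ n (p : X × ℝ), (if p.2 < u_n n p.1 then (1:ℝ) else 0) ≤ 1 := by
      intro n p; split_ifs <;> norm_num
    have hn : ∀ n, ∫ p, (if p.2 < u_n n p.1 then (1:ℝ) else 0) * B p ∂(μ.prod volume)
        ≤ ∫ p, (if p.2 < u_n n p.1 then (1:ℝ) else 0) * A p ∂(μ.prod volume) := by
      intro n
      rw [← hIdA _ (hInmeas n) (hIn0 n) (hIn1 n), ← hIdB _ (hInmeas n) (hIn0 n) (hIn1 n)]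
      rw [hcov _ (hInmeas n)]
      refine setIntegral_mono_on ?_ ?_ hs ?_
      · refine Measure.integrableOn_of_bounded (M := 1) hsfin.ne ?_ (ae_of_all _ fun q => ?_)
        · exact ((hInmeas n).comp (measurable_fst.fst.prodMk measurable_snd)).aestronglyMeasurable
        · rw [Real.norm_eq_abs, abs_of_nonneg (hIn0 n _)]; exact hIn1 n _
      · refine Measure.integrableOn_of_bounded (M := 1) hsfin.ne ?_ (ae_of_all _ fun q => ?_)
        · exact ((hInmeas n).comp measurable_fst).aestronglyMeasurable
        · rw [Real.norm_eq_abs, abs_of_nonneg (hIn0 n _)]; exact hIn1 n _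
      · intro q hq
        by_cases h2 : q.2 < u_n n q.1.1
        · have h1 : q.1.2 < u_n n q.1.1 := lt_trans (hsR q hq) h2
          simp [h1, h2]
        · simp only [h2, if_false]
          exact hIn0 n _
    have hle : ∫ p, f p * B p ∂(μ.prod volume) ≤ ∫ p, f p * A p ∂(μ.prod volume) :=
      le_of_tendsto_of_tendsto' (hweak B hBint) (hweak A hAint) hn
    have h1 : ∫ q in s, f (q.1.1, q.2) ∂π ≤ ∫ q in s, f q.1 ∂π := by
      calc ∫ q in s, f (q.1.1, q.2) ∂π = ∫ q in s', f q.1 ∂π := (hcov f hfmeas).symm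
        _ = ∫ p, f p * B p ∂(μ.prod volume) := hIdB f hfmeas hf0 hf1
        _ ≤ ∫ p, f p * A p ∂(μ.prod volume) := hle
        _ = ∫ q in s, f q.1 ∂π := (hIdA f hfmeas hf0 hf1).symm
    have hint1 : IntegrableOn (fun q : (X × ℝ) × ℝ => f q.1) s π := by
      refine Measure.integrableOn_of_bounded (M := 1) hsfin.ne
        (hfmeas.comp measurable_fst).aestronglyMeasurable (ae_of_all _ fun q => ?_)
      rw [Real.norm_eq_abs, abs_of_nonneg (hf0 _)]; exact hf1 _
    have hint2 : IntegrableOn (fun q : (X × ℝ) × ℝ => f (q.1.1, q.2)) s π := by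
      refine Measure.integrableOn_of_bounded (M := 1) hsfin.ne
        ((hfmeas.comp (measurable_fst.fst.prodMk measurable_snd))).aestronglyMeasurable
        (ae_of_all _ fun q => ?_)
      rw [Real.norm_eq_abs, abs_of_nonneg (hf0 _)]; exact hf1 _
    rw [integral_sub hint1 hint2]
    exact sub_nonneg.2 h1
  -- conclude a.e. on the region
  have hRM : ∀ M : ℕ, ∀ᵐ q ∂π, q ∈ ({q : (X × ℝ) × ℝ | q.1.2 < q.2} ∩
      (((univ : Set X) ×ˢ Ioo (-(M:ℝ)-1) (M+1)) ×ˢ Ioo (-(M:ℝ)-1) (M+1))) →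
      0 ≤ f q.1 - f (q.1.1, q.2) := by
    intro M
    set RM : Set ((X × ℝ) × ℝ) := {q : (X × ℝ) × ℝ | q.1.2 < q.2} ∩
      (((univ : Set X) ×ˢ Ioo (-(M:ℝ)-1) (M+1)) ×ˢ Ioo (-(M:ℝ)-1) (M+1)) with hRMdef
    have hRMmeas : MeasurableSet RM :=
      (measurableSet_lt measurable_fst.snd measurable_snd).inter
        ((MeasurableSet.univ.prod measurableSet_Ioo).prod measurableSet_Ioo)
    have hRMfin : π RM < ⊤ := by
      refine lt_of_le_of_lt (measure_mono inter_subset_right) ?_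
      rw [hπdef, Measure.prod_prod, Measure.prod_prod]
      exact ENNReal.mul_lt_top
        (ENNReal.mul_lt_top (measure_lt_top μ _) (by simp [Real.volume_Ioo]))
        (by simp [Real.volume_Ioo])
    have hgmeas : Measurable fun q : (X × ℝ) × ℝ => f q.1 - f (q.1.1, q.2) :=
      (hfmeas.comp measurable_fst).sub
        (hfmeas.comp (measurable_fst.fst.prodMk measurable_snd))
    have hgint : Integrable (fun q : (X × ℝ) × ℝ => f q.1 - f (q.1.1, q.2)) (π.restrict RM) := by
      refine Measure.integrableOn_of_bounded (M := 1) hRMfin.ne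
        hgmeas.aestronglyMeasurable (ae_of_all _ fun q => ?_)
      rw [Real.norm_eq_abs]
      refine abs_le.2 ⟨?_, ?_⟩
      · have := hf0 q.1; have := hf1 (q.1.1, q.2); linarith
      · have := hf1 q.1; have := hf0 (q.1.1, q.2); linarith
    have hae := ae_nonneg_of_forall_setIntegral_nonneg hgint ?_
    · exact (ae_restrict_iff' hRMmeas).1 hae
    · intro t ht htfin
      rw [Measure.restrict_restrict ht]
      refine key (t ∩ RM) (ht.inter hRMmeas) (fun q hq => hq.2.1) ?_
      exact lt_of_le_of_lt (measure_mono inter_subset_right) hRMfin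
  have hall := ae_all_iff.2 hRM
  refine hall.mono fun q hq hlt => ?_
  have hc : |q.1.2| + |q.2| ≤ (⌈|q.1.2| + |q.2|⌉₊ : ℝ) := Nat.le_ceil _
  have ha1 := abs_nonneg q.1.2
  have ha2 := abs_nonneg q.2
  have hb1 := le_abs_self q.1.2
  have hb2 := neg_abs_le q.1.2
  have hb3 := le_abs_self q.2
  have hb4 := neg_abs_le q.2
  have := hq ⌈|q.1.2| + |q.2|⌉₊ ⟨hlt, ⟨⟨Set.mem_univ _, by constructor <;> linarith⟩,
    by constructor <;> linarith⟩⟩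
  linarith


end Stmt15Aux

theorem stmt_15 {X : Type*} [MeasurableSpace X] (μ : Measure X) [IsFiniteMeasure μ]
    (u_n : ℕ → X → ℝ) (f : X × ℝ → ℝ)
    (hmeas : ∀ n, Measurable (u_n n)) (hfmeas : Measurable f)
    (hb : ∀ n x, u_n n x ∈ Icc (0:ℝ) 1)
    (hf0 : ∀ p, 0 ≤ f p) (hf1 : ∀ p, f p ≤ 1)
    (hweak : ∀ φ : X × ℝ → ℝ, Integrable φ (μ.prod volume) →
      Tendsto
        (fun n => ∫ p, (if p.2 < u_n n p.1 then (1:ℝ) else 0) * φ p ∂(μ.prod volume))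
        atTop (nhds (∫ p, f p * φ p ∂(μ.prod volume)))) :
    ∀ᵐ x ∂μ,
      (∃ F : ℝ → ℝ, Antitone F ∧ ∀ᵐ ξ : ℝ, f (x, ξ) = F ξ) ∧
      (∀ᵐ ξ : ℝ, ξ < 0 → f (x, ξ) = 1) ∧
      (∀ᵐ ξ : ℝ, 1 < ξ → f (x, ξ) = 0) := by
  have hA1 := Measure.ae_ae_of_ae_prod (stepA1' μ u_n f hmeas hfmeas hb hf0 hf1 hweak)
  have hA2 := Measure.ae_ae_of_ae_prod (stepA2' μ u_n f hmeas hfmeas hb hf0 hf1 hweak)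
  have hB2 := Measure.ae_ae_of_ae_prod
    (Measure.ae_ae_of_ae_prod (stepB' μ u_n f hmeas hfmeas hb hf0 hf1 hweak))
  filter_upwards [hB2, hA1, hA2] with x hx hx1 hx2
  refine ⟨?_, hx2, hx1⟩
  have hgmeas : Measurable fun ξ : ℝ => f (x, ξ) := hfmeas.comp measurable_prodMk_left
  have hmset : MeasurableSet {z : ℝ × ℝ | z.1 < z.2 → f (x, z.2) ≤ f (x, z.1)} := by
    have heq : {z : ℝ × ℝ | z.1 < z.2 → f (x, z.2) ≤ f (x, z.1)}
        = {z : ℝ × ℝ | z.1 < z.2}ᶜ ∪ {z : ℝ × ℝ | f (x, z.2) ≤ f (x, z.1)} := by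
      ext z; simp [imp_iff_not_or]
    rw [heq]
    exact ((measurableSet_lt measurable_fst measurable_snd).compl).union
      (measurableSet_le (hgmeas.comp measurable_snd) (hgmeas.comp measurable_fst))
  have hprod : ∀ᵐ z : ℝ × ℝ ∂((volume : Measure ℝ).prod volume),
      z.1 < z.2 → f (x, z.2) ≤ f (x, z.1) := (Measure.ae_prod_iff_ae_ae hmset).2 hx
  exact antitone_rep (fun ξ => f (x, ξ)) (fun ξ => hf1 _) hprod
end
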